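/- For the complete binary tree T on n = 2^r − 1 vertices and any fixed k ≥ 2, every k-rainbow separating path system of T has size at least (1 + 16^{-(k+6)})·(n+1)/2 for n sufficiently large; in particular the class of complete binary trees satisfies r_k > 1 for every finite k. -/

import Mathlib

open SimpleGraph

/-- A path in a graph `G`: a walk that is a path, with its endpoints. -/
structure GPath {V : Type*} (G : SimpleGraph V) where
  a : V
  b : V
  walk : G.Walk a b
  isPath : walk.IsPath

/-- `P` is a `k`-rainbow separating path system of `G`: every pair of distinct
edges is separated by two paths of distinct colors. -/
def IsRSPS {V : Type*} (G : SimpleGraph V) (k : ℕ)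
    (P : Multiset (GPath G × Fin k)) : Prop :=
  ∀ e f : Sym2 V, e ∈ G.edgeSet → f ∈ G.edgeSet → e ≠ f →
    ∃ p ∈ P, ∃ q ∈ P, p.2 ≠ q.2 ∧
      e ∈ p.1.walk.edges ∧ f ∉ p.1.walk.edges ∧
      f ∈ q.1.walk.edges ∧ e ∉ q.1.walk.edges

/-- The `k`-rainbow separation number `c_k(G)`. -/
noncomputable def cRSPS {V : Type*} (G : SimpleGraph V) (k : ℕ) : ℕ :=
  sInf {m | ∃ P : Multiset (GPath G × Fin k), IsRSPS G k P ∧ Multiset.card P = m}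

/-- `P` is a weakly separating path system of `G`. -/
def IsWeakSep {V : Type*} (G : SimpleGraph V) (P : Multiset (GPath G)) : Prop :=
  ∀ e f : Sym2 V, e ∈ G.edgeSet → f ∈ G.edgeSet → e ≠ f →
    ∃ p ∈ P, (e ∈ p.walk.edges ∧ f ∉ p.walk.edges) ∨
      (f ∈ p.walk.edges ∧ e ∉ p.walk.edges)

/-- The weak separation number `wsp(G)`. -/
noncomputable def wsp {V : Type*} (G : SimpleGraph V) : ℕ :=
  sInf {m | ∃ P : Multiset (GPath G), IsWeakSep G P ∧ Multiset.card P = m}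

/-- `P` is a strongly separating path system of `G`. -/
def IsStrongSep {V : Type*} (G : SimpleGraph V) (P : Multiset (GPath G)) : Prop :=
  ∀ e f : Sym2 V, e ∈ G.edgeSet → f ∈ G.edgeSet → e ≠ f →
    ∃ p ∈ P, e ∈ p.walk.edges ∧ f ∉ p.walk.edges

/-- The strong separation number `ssp(G)`. -/
noncomputable def ssp {V : Type*} (G : SimpleGraph V) : ℕ :=
  sInf {m | ∃ P : Multiset (GPath G), IsStrongSep G P ∧ Multiset.card P = m}

/-- The complete binary tree on `n` vertices (heap indexing:
`i` is adjacent to `2i+1` and `2i+2`); for `n = 2^r − 1` this is the perfect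
binary tree of depth `r − 1`. -/
def completeBinaryTree (n : ℕ) : SimpleGraph (Fin n) :=
  SimpleGraph.fromRel (fun a b =>
    (b : ℕ) = 2 * (a : ℕ) + 1 ∨ (b : ℕ) = 2 * (a : ℕ) + 2)


namespace S19

/-! ### Heap index arithmetic -/

def par (i : ℕ) : ℕ := (i - 1) / 2

lemma par_le (i : ℕ) : par i ≤ i := by unfold par; omega

lemma par_lt {i : ℕ} (h : 1 ≤ i) : par i < i := by unfold par; omega

lemma par_child1 (a : ℕ) : par (2*a+1) = a := by unfold par; omega
lemma par_child2 (a : ℕ) : par (2*a+2) = a := by unfold par; omega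

lemma child_cases {u : ℕ} (h : 1 ≤ u) : u = 2 * par u + 1 ∨ u = 2 * par u + 2 := by
  unfold par; omega

lemma par_zero : par 0 = 0 := by unfold par; simp

lemma par_iter_zero (j : ℕ) : par^[j] 0 = 0 := by
  induction j with
  | zero => rfl
  | succ j ih => rw [Function.iterate_succ_apply, par_zero, ih]

/-- `desc b u` : `u` lies in the subtree rooted at `b` (i.e. `b` is an ancestor of `u`). -/
def desc (b u : ℕ) : Prop := ∃ j, par^[j] u = b

lemma desc_refl (b : ℕ) : desc b b := ⟨0, rfl⟩

lemma desc_par_le {b u : ℕ} {j : ℕ} (h : par^[j] u = b) : b ≤ u := by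
  induction j generalizing u with
  | zero => simp at h; omega
  | succ j ih =>
    rw [Function.iterate_succ_apply] at h
    exact le_trans (ih h) (par_le u)

lemma desc_le {b u : ℕ} (h : desc b u) : b ≤ u := by
  obtain ⟨j, hj⟩ := h; exact desc_par_le hj

lemma desc_antisymm {b u : ℕ} (h : desc b u) (h' : desc u b) : b = u :=
  le_antisymm (desc_le h) (desc_le h')

lemma desc_child {b u c : ℕ} (h : desc b u) (hc : c = 2*u+1 ∨ c = 2*u+2) : desc b c := by
  obtain ⟨j, hj⟩ := h
  refine ⟨j+1, ?_⟩
  rw [Function.iterate_succ_apply]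
  have hpc : par c = u := by
    rcases hc with h1 | h1
    · rw [h1]; exact par_child1 u
    · rw [h1]; exact par_child2 u
  rw [hpc]; exact hj

lemma desc_par {b u : ℕ} (h : desc b (par u)) : desc b u := by
  obtain ⟨j, hj⟩ := h
  exact ⟨j+1, by rw [Function.iterate_succ_apply]; exact hj⟩

lemma desc_comparable {b b' u : ℕ} (h : desc b u) (h' : desc b' u) : desc b b' ∨ desc b' b := by
  obtain ⟨i, hi⟩ := h; obtain ⟨j, hj⟩ := h'
  rcases le_total i j with hij | hij
  · right
    refine ⟨j - i, ?_⟩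
    have : par^[j - i + i] u = b' := by rwa [Nat.sub_add_cancel hij]
    rw [Function.iterate_add_apply, hi] at this
    exact this
  · left
    refine ⟨i - j, ?_⟩
    have : par^[i - j + j] u = b := by rwa [Nat.sub_add_cancel hij]
    rw [Function.iterate_add_apply, hj] at this
    exact this

/-- interval bound for descendants -/
lemma desc_interval_aux {b u : ℕ} (hb : 1 ≤ b) {j : ℕ} (hj : par^[j] u = b) :
    2^j * (b+1) ≤ u + 1 ∧ u + 1 < 2^j * (b+2) := by
  induction j generalizing u with
  | zero => simp at hj ⊢; omega
  | succ j ih =>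
    rw [Function.iterate_succ_apply] at hj
    have hu1 : 1 ≤ u := by
      by_contra h0
      have hu0 : u = 0 := by omega
      subst hu0
      rw [par_zero] at hj
      rw [par_iter_zero] at hj
      omega
    have h2 := ih hj
    have hc := child_cases hu1
    have h2j : 1 ≤ 2^j := Nat.one_le_two_pow
    constructor
    · have : 2^(j+1) * (b+1) = 2 * (2^j * (b+1)) := by ring
      rw [this]; omega
    · have : 2^(j+1) * (b+2) = 2 * (2^j * (b+2)) := by ring
      rw [this]; omega

lemma desc_interval {b u : ℕ} (hb : 1 ≤ b) (h : desc b u) :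
    ∃ j, 2^j * (b+1) ≤ u + 1 ∧ u + 1 < 2^j * (b+2) := by
  obtain ⟨j, hj⟩ := h; exact ⟨j, desc_interval_aux hb hj⟩

/-- two distinct roots in the same dyadic slice have disjoint subtrees -/
lemma desc_slice_unique {d b b' u : ℕ} (hd : 1 ≤ d) (hb : 2^d ≤ b + 1) (hb2 : b + 1 < 2^(d+1))
    (hb' : 2^d ≤ b' + 1) (hb2' : b' + 1 < 2^(d+1))
    (h : desc b u) (h' : desc b' u) : b = b' := by
  have h2d : 2 ≤ 2^d := by
    calc 2 = 2^1 := (pow_one 2).symm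
    _ ≤ 2^d := Nat.pow_le_pow_right (by norm_num) hd
  have hb1 : 1 ≤ b := by omega
  have hb1' : 1 ≤ b' := by omega
  rcases desc_comparable h h' with hc | hc
  · obtain ⟨j, hj1, hj2⟩ := desc_interval hb1 hc
    rcases Nat.eq_zero_or_pos j with hj0 | hjpos
    · subst hj0; rw [pow_zero, one_mul] at hj1 hj2; omega
    · exfalso
      have h2j : 2 ≤ 2^j := by
        calc 2 = 2^1 := (pow_one 2).symm
        _ ≤ 2^j := Nat.pow_le_pow_right (by norm_num) hjpos
      have h3 : 2*(b+1) ≤ 2^j*(b+1) := Nat.mul_le_mul_right _ h2j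
      have h4 : 2^(d+1) = 2*2^d := by rw [pow_succ]; ring
      omega
  · obtain ⟨j, hj1, hj2⟩ := desc_interval hb1' hc
    rcases Nat.eq_zero_or_pos j with hj0 | hjpos
    · subst hj0; rw [pow_zero, one_mul] at hj1 hj2; omega
    · exfalso
      have h2j : 2 ≤ 2^j := by
        calc 2 = 2^1 := (pow_one 2).symm
        _ ≤ 2^j := Nat.pow_le_pow_right (by norm_num) hjpos
      have h3 : 2*(b'+1) ≤ 2^j*(b'+1) := Nat.mul_le_mul_right _ h2j
      have h4 : 2^(d+1) = 2*2^d := by rw [pow_succ]; ring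
      omega


/-! ### Generic walk lemmas -/

section WalkLemmas
set_option linter.unusedSectionVars false

variable {V : Type*} {G : SimpleGraph V} [DecidableEq V]

lemma mem_support_of_mem_edge {a c : V} {w : G.Walk a c} {e : Sym2 V} {v : V}
    (he : e ∈ w.edges) (hv : v ∈ e) : v ∈ w.support := by
  induction e with
  | _ x y =>
    rcases Sym2.mem_iff.1 hv with h | h
    · subst h; exact w.fst_mem_support_of_mem_edges he
    · subst h; exact w.snd_mem_support_of_mem_edges he

/-- at the start of a path, there is at most one incident edge -/
lemma start_edge_unique {a c : V} {w : G.Walk a c} (hw : w.IsPath) {e₁ e₂ : Sym2 V}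
    (h1 : e₁ ∈ w.edges) (h2 : e₂ ∈ w.edges) (m1 : a ∈ e₁) (m2 : a ∈ e₂) : e₁ = e₂ := by
  induction w with
  | nil => simp at h1
  | @cons u x y hadj w ih =>
    rw [SimpleGraph.Walk.cons_isPath_iff] at hw
    have key : ∀ {e : Sym2 V}, e ∈ (SimpleGraph.Walk.cons hadj w).edges → u ∈ e →
        e = s(u, x) := by
      intro e he hue
      have he' : e ∈ s(u,x) :: w.edges := by
        rw [← SimpleGraph.Walk.edges_cons hadj w]; exact he
      rcases List.mem_cons.1 he' with hc | hc
      · exact hc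
      · exact absurd (mem_support_of_mem_edge hc hue) hw.2
    rw [key h1 m1, key h2 m2]

lemma end_edge_unique {a c : V} {w : G.Walk a c} (hw : w.IsPath) {e₁ e₂ : Sym2 V}
    (h1 : e₁ ∈ w.edges) (h2 : e₂ ∈ w.edges) (m1 : c ∈ e₁) (m2 : c ∈ e₂) : e₁ = e₂ := by
  have h1' : e₁ ∈ w.reverse.edges := by rw [SimpleGraph.Walk.edges_reverse, List.mem_reverse]; exact h1
  have h2' : e₂ ∈ w.reverse.edges := by rw [SimpleGraph.Walk.edges_reverse, List.mem_reverse]; exact h2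
  exact start_edge_unique hw.reverse h1' h2' m1 m2

lemma exists_start_edge {a c : V} (w : G.Walk a c) (h : a ≠ c) :
    ∃ e ∈ w.edges, a ∈ e := by
  obtain ⟨u, hadj, w', rfl⟩ := SimpleGraph.Walk.exists_eq_cons_of_ne h w
  exact ⟨s(a, u), by simp, by simp⟩

lemma exists_end_edge {a c : V} (w : G.Walk a c) (h : a ≠ c) :
    ∃ e ∈ w.edges, c ∈ e := by
  obtain ⟨e, he, hce⟩ := exists_start_edge w.reverse (Ne.symm h)
  rw [SimpleGraph.Walk.edges_reverse, List.mem_reverse] at he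
  exact ⟨e, he, hce⟩

lemma interior_two_edges {a c : V} {w : G.Walk a c} (hw : w.IsPath) {v : V}
    (hv : v ∈ w.support) (hva : v ≠ a) (hvc : v ≠ c) :
    ∃ e₁ ∈ w.edges, ∃ e₂ ∈ w.edges, e₁ ≠ e₂ ∧ v ∈ e₁ ∧ v ∈ e₂ := by
  set w1 := w.takeUntil v hv with hw1
  set w2 := w.dropUntil v hv with hw2
  have hsplit : w1.append w2 = w := w.take_spec hv
  have hedges : w.edges = w1.edges ++ w2.edges := by
    rw [← hsplit, SimpleGraph.Walk.edges_append]
  obtain ⟨e₁, he₁, hve₁⟩ := exists_end_edge w1 (Ne.symm hva)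
  obtain ⟨e₂, he₂, hve₂⟩ := exists_start_edge w2 hvc
  have hnodup : (w1.edges ++ w2.edges).Nodup := by
    rw [← hedges]; exact hw.isTrail.edges_nodup
  refine ⟨e₁, by rw [hedges]; exact List.mem_append_left _ he₁,
          e₂, by rw [hedges]; exact List.mem_append_right _ he₂, ?_, hve₁, hve₂⟩
  intro hEq
  subst hEq
  exact (List.nodup_append.1 hnodup).2.2 _ he₁ _ he₂ rfl

/-- a path has at most two edges through any given vertex -/
lemma three_edges_collide {a c : V} {w : G.Walk a c} (hw : w.IsPath) {v : V}
    {e₁ e₂ e₃ : Sym2 V} (h1 : e₁ ∈ w.edges) (h2 : e₂ ∈ w.edges) (h3 : e₃ ∈ w.edges)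
    (m1 : v ∈ e₁) (m2 : v ∈ e₂) (m3 : v ∈ e₃) : e₁ = e₂ ∨ e₁ = e₃ ∨ e₂ = e₃ := by
  have hv : v ∈ w.support := mem_support_of_mem_edge h1 m1
  by_cases hva : v = a
  · subst hva; exact Or.inl (start_edge_unique hw h1 h2 m1 m2)
  by_cases hvc : v = c
  · subst hvc; exact Or.inl (end_edge_unique hw h1 h2 m1 m2)
  set w1 := w.takeUntil v hv with hw1
  set w2 := w.dropUntil v hv with hw2
  have hsplit : w1.append w2 = w := w.take_spec hv
  have hedges : w.edges = w1.edges ++ w2.edges := by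
    rw [← hsplit, SimpleGraph.Walk.edges_append]
  have hp1 : w1.IsPath := hw.takeUntil hv
  have hp2 : w2.IsPath := hw.dropUntil hv
  have uniq1 : ∀ {e e' : Sym2 V}, e ∈ w1.edges → e' ∈ w1.edges → v ∈ e → v ∈ e' → e = e' :=
    fun he he' hv1 hv2 => end_edge_unique hp1 he he' hv1 hv2
  have uniq2 : ∀ {e e' : Sym2 V}, e ∈ w2.edges → e' ∈ w2.edges → v ∈ e → v ∈ e' → e = e' :=
    fun he he' hv1 hv2 => start_edge_unique hp2 he he' hv1 hv2
  rw [hedges] at h1 h2 h3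
  rcases List.mem_append.1 h1 with g1 | g1 <;>
  rcases List.mem_append.1 h2 with g2 | g2 <;>
  rcases List.mem_append.1 h3 with g3 | g3
  · exact Or.inl (uniq1 g1 g2 m1 m2)
  · exact Or.inl (uniq1 g1 g2 m1 m2)
  · exact Or.inr (Or.inl (uniq1 g1 g3 m1 m3))
  · exact Or.inr (Or.inr (uniq2 g2 g3 m2 m3))
  · exact Or.inr (Or.inr (uniq1 g2 g3 m2 m3))
  · exact Or.inr (Or.inl (uniq2 g1 g3 m1 m3))
  · exact Or.inl (uniq2 g1 g2 m1 m2)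
  · exact Or.inl (uniq2 g1 g2 m1 m2)

end WalkLemmas
/-! ### The complete binary tree graph -/

section Tree
set_option linter.unusedSectionVars false

variable {n : ℕ} [NeZero n]

def vf (n : ℕ) [NeZero n] (i : ℕ) : Fin n :=
  ⟨i % n, Nat.mod_lt _ (Nat.pos_of_ne_zero (NeZero.ne n))⟩

lemma vf_coe {i : ℕ} (h : i < n) : ((vf n i : Fin n) : ℕ) = i := Nat.mod_eq_of_lt h

lemma vf_self (v : Fin n) : vf n (v : ℕ) = v := by
  apply Fin.ext; exact vf_coe v.isLt

/-- the edge joining `c` with its parent -/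
def pe (n : ℕ) [NeZero n] (c : ℕ) : Sym2 (Fin n) := s(vf n c, vf n (par c))

lemma childrel (u v : ℕ) : (v = 2*u+1 ∨ v = 2*u+2) ↔ (1 ≤ v ∧ u = par v) := by
  unfold par; omega

lemma cbt_adj {u v : Fin n} :
    (completeBinaryTree n).Adj u v ↔ u ≠ v ∧
      ((1 ≤ (v:ℕ) ∧ (u:ℕ) = par (v:ℕ)) ∨ (1 ≤ (u:ℕ) ∧ (v:ℕ) = par (u:ℕ))) := by
  rw [completeBinaryTree, SimpleGraph.fromRel_adj]
  constructor
  · rintro ⟨hne, h | h⟩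
    · exact ⟨hne, Or.inl ((childrel _ _).1 h)⟩
    · exact ⟨hne, Or.inr ((childrel _ _).1 h)⟩
  · rintro ⟨hne, h | h⟩
    · exact ⟨hne, Or.inl ((childrel _ _).2 h)⟩
    · exact ⟨hne, Or.inr ((childrel _ _).2 h)⟩

lemma pe_mem_edgeSet {c : ℕ} (h1 : 1 ≤ c) (h2 : c < n) :
    pe n c ∈ (completeBinaryTree n).edgeSet := by
  rw [pe, SimpleGraph.mem_edgeSet, cbt_adj]
  have hpc : par c < n := lt_of_le_of_lt (par_le c) h2
  rw [vf_coe h2, vf_coe hpc]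
  constructor
  · intro hEq
    have := congrArg (fun x : Fin n => (x : ℕ)) hEq
    simp only [vf_coe h2, vf_coe hpc] at this
    have := par_lt h1
    omega
  · exact Or.inr ⟨h1, rfl⟩

lemma edge_eq_pe {e : Sym2 (Fin n)} (he : e ∈ (completeBinaryTree n).edgeSet) :
    ∃ c : ℕ, 1 ≤ c ∧ c < n ∧ e = pe n c := by
  induction e with
  | _ u v =>
    rw [SimpleGraph.mem_edgeSet, cbt_adj] at he
    obtain ⟨hne, h | h⟩ := he
    · refine ⟨(v : ℕ), h.1, v.isLt, ?_⟩
      rw [pe, vf_self, ← h.2, vf_self, Sym2.eq_swap]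
    · refine ⟨(u : ℕ), h.1, u.isLt, ?_⟩
      rw [pe, vf_self, ← h.2, vf_self]

lemma pe_inj {c c' : ℕ} (h1 : 1 ≤ c) (h2 : c < n) (h1' : 1 ≤ c') (h2' : c' < n)
    (h : pe n c = pe n c') : c = c' := by
  rw [pe, pe, Sym2.eq_iff] at h
  have hpc : par c < n := lt_of_le_of_lt (par_le c) h2
  have hpc' : par c' < n := lt_of_le_of_lt (par_le c') h2'
  rcases h with ⟨ha, hb⟩ | ⟨ha, hb⟩
  · have := congrArg (fun x : Fin n => (x : ℕ)) ha
    simp only [vf_coe h2, vf_coe h2'] at this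
    exact this
  · have ha' := congrArg (fun x : Fin n => (x : ℕ)) ha
    have hb' := congrArg (fun x : Fin n => (x : ℕ)) hb
    simp only [vf_coe h2, vf_coe h2', vf_coe hpc, vf_coe hpc'] at ha' hb'
    have := par_lt h1
    have := par_lt h1'
    omega

lemma mem_pe_left {c : ℕ} (h2 : c < n) : vf n c ∈ pe n c := by
  rw [pe]; exact Sym2.mem_mk_left _ _

/-- characterization of the edges at a vertex -/
lemma edge_at {e : Sym2 (Fin n)} (he : e ∈ (completeBinaryTree n).edgeSet)
    {v : Fin n} (hv : v ∈ e) :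
    e = pe n (v : ℕ) ∨
      ∃ c : ℕ, (c = 2*(v:ℕ)+1 ∨ c = 2*(v:ℕ)+2) ∧ c < n ∧ e = pe n c := by
  induction e with
  | _ x y =>
    rw [SimpleGraph.mem_edgeSet, cbt_adj] at he
    obtain ⟨hne, hrel⟩ := he
    rcases Sym2.mem_iff.1 hv with rfl | rfl
    · -- v = x
      rcases hrel with ⟨hy1, hxy⟩ | ⟨hx1, hyx⟩
      · -- x = par y : y is a child of x
        right
        refine ⟨(y:ℕ), ?_, y.isLt, ?_⟩
        · exact (childrel _ _).2 ⟨hy1, hxy⟩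
        · rw [pe, vf_self, ← hxy, vf_self, Sym2.eq_swap]
      · left
        rw [pe, vf_self, ← hyx, vf_self]
    · -- v = y
      rcases hrel with ⟨hy1, hxy⟩ | ⟨hx1, hyx⟩
      · left
        rw [pe, vf_self, ← hxy, vf_self, Sym2.eq_swap]
      · right
        refine ⟨(x:ℕ), ?_, x.isLt, ?_⟩
        · exact (childrel _ _).2 ⟨hx1, hyx⟩
        · rw [pe, vf_self, ← hyx, vf_self]

/-! ### Boundary / subtree lemmas -/

lemma step_desc {b : ℕ} {u v : Fin n} (h : (completeBinaryTree n).Adj u v)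
    (hu : desc b (u:ℕ)) (hv : ¬ desc b (v:ℕ)) : s(u, v) = pe n b := by
  rcases (cbt_adj.1 h).2 with ⟨hv1, huv⟩ | ⟨hu1, hvu⟩
  · -- u = par v, v child of u
    exfalso
    apply hv
    refine desc_child hu ?_
    have := (childrel (u:ℕ) (v:ℕ)).2 ⟨hv1, huv⟩
    omega
  · -- v = par u
    obtain ⟨j, hj⟩ := hu
    cases j with
    | zero =>
      simp at hj
      subst hj
      rw [pe, vf_self, ← hvu, vf_self]
    | succ j =>
      exfalso
      apply hv
      rw [Function.iterate_succ_apply] at hj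
      exact ⟨j, by rw [hvu]; exact hj⟩

lemma walk_desc {b : ℕ} {x y : Fin n} (w : (completeBinaryTree n).Walk x y)
    (hx : desc b (x:ℕ)) (hpe : pe n b ∉ w.edges) :
    ∀ v ∈ w.support, desc b (v:ℕ) := by
  induction w with
  | nil => intro v hv; simp at hv; subst hv; exact hx
  | @cons a c y hadj w ih =>
    intro v hv
    have hc : desc b (c:ℕ) := by
      by_contra hcon
      have hstep := step_desc hadj hx hcon
      apply hpe
      rw [SimpleGraph.Walk.edges_cons, ← hstep]
      exact List.mem_cons_self
    rw [SimpleGraph.Walk.support_cons] at hv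
    rcases List.mem_cons.1 hv with rfl | hv'
    · exact hx
    · exact ih hc (fun hmem => hpe (by rw [SimpleGraph.Walk.edges_cons]; exact List.mem_cons_of_mem _ hmem)) v hv'

lemma crossing {b : ℕ} {x y : Fin n} (w : (completeBinaryTree n).Walk x y)
    (hx : desc b (x:ℕ)) (hy : ¬ desc b (y:ℕ)) : pe n b ∈ w.edges := by
  by_contra hpe
  exact hy (walk_desc w hx hpe y w.end_mem_support)

lemma support_desc_of_edges {b : ℕ} {x y : Fin n} {w : (completeBinaryTree n).Walk x y}
    (hpe : pe n b ∉ w.edges) {u : Fin n} (hu : u ∈ w.support) (hud : desc b (u:ℕ)) :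
    ∀ v ∈ w.support, desc b (v:ℕ) := by
  -- from u we can reach x without using pe b
  have hx : desc b (x:ℕ) := by
    have h1 : pe n b ∉ (w.takeUntil u hu).edges :=
      fun hmem => hpe (SimpleGraph.Walk.edges_takeUntil_subset w hu hmem)
    have h2 : pe n b ∉ (w.takeUntil u hu).reverse.edges := by
      rw [SimpleGraph.Walk.edges_reverse, List.mem_reverse]; exact h1
    have := walk_desc (w.takeUntil u hu).reverse hud h2 x
      (by rw [SimpleGraph.Walk.support_reverse, List.mem_reverse]; exact (w.takeUntil u hu).start_mem_support)
    exact this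
  exact walk_desc w hx hpe

lemma no_double_cross {b : ℕ} {x y : Fin n} {w : (completeBinaryTree n).Walk x y}
    (hw : w.IsPath) (hx : desc b (x:ℕ)) (hy : desc b (y:ℕ)) :
    ∀ u ∈ w.support, desc b (u:ℕ) := by
  intro u hu
  by_contra hcon
  have h1 : pe n b ∈ (w.takeUntil u hu).edges := crossing _ hx hcon
  have h2 : pe n b ∈ (w.dropUntil u hu).reverse.edges := crossing _ hy hcon
  rw [SimpleGraph.Walk.edges_reverse, List.mem_reverse] at h2
  have hsplit : (w.takeUntil u hu).append (w.dropUntil u hu) = w := w.take_spec hu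
  have hnodup : ((w.takeUntil u hu).edges ++ (w.dropUntil u hu).edges).Nodup := by
    rw [← SimpleGraph.Walk.edges_append, hsplit]; exact hw.isTrail.edges_nodup
  exact (List.nodup_append.1 hnodup).2.2 _ h1 _ h2 rfl

end Tree

/-! ### Multiset counting helpers -/

section MultisetHelpers

variable {α : Type*}

lemma sum_card_filter_le (P : Multiset α) (s : Finset ℕ) (Q : ℕ → α → Prop)
    [∀ v, DecidablePred (Q v)]
    (hdisj : ∀ v ∈ s, ∀ w ∈ s, v ≠ w → ∀ p, ¬(Q v p ∧ Q w p)) :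
    ∑ v ∈ s, Multiset.card (P.filter (Q v)) ≤ Multiset.card P := by
  classical
  induction s using Finset.induction_on generalizing P with
  | empty => simp
  | @insert a s ha ih =>
    rw [Finset.sum_insert ha]
    have hsub : ∀ v ∈ s, (P.filter (Q v)) = ((P.filter (fun p => ¬ Q a p)).filter (Q v)) := by
      intro v hv
      rw [Multiset.filter_filter]
      apply Multiset.filter_congr
      intro p hp
      constructor
      · intro h
        refine ⟨h, ?_⟩
        intro hQa
        exact hdisj a (Finset.mem_insert_self a s) v (Finset.mem_insert_of_mem hv)
          (by rintro rfl; exact ha hv) p ⟨hQa, h⟩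
      · exact fun h => h.1
    have h1 : ∑ v ∈ s, Multiset.card (P.filter (Q v))
        = ∑ v ∈ s, Multiset.card ((P.filter (fun p => ¬ Q a p)).filter (Q v)) := by
      apply Finset.sum_congr rfl
      intro v hv; rw [hsub v hv]
    rw [h1]
    have h2 := ih (P.filter (fun p => ¬ Q a p))
      (fun v hv w hw hne p => hdisj v (Finset.mem_insert_of_mem hv) w (Finset.mem_insert_of_mem hw) hne p)
    have h3 : Multiset.card (P.filter (Q a)) + Multiset.card (P.filter (fun p => ¬ Q a p))
        = Multiset.card P := by
      rw [← Multiset.card_add, Multiset.filter_add_not]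
    omega

lemma fubini_card_filter (P : Multiset α) (s : Finset ℕ) (Q : ℕ → α → Prop)
    [∀ v, DecidablePred (Q v)] [∀ p, DecidablePred (fun v => Q v p)] :
    ∑ v ∈ s, Multiset.card (P.filter (Q v))
      = (P.map (fun p => (s.filter (fun v => Q v p)).card)).sum := by
  induction P using Multiset.induction_on with
  | empty => simp
  | cons a P ih =>
    rw [Multiset.map_cons, Multiset.sum_cons, ← ih]
    have : ∀ v ∈ s, Multiset.card ((a ::ₘ P).filter (Q v))
        = (if Q v a then 1 else 0) + Multiset.card (P.filter (Q v)) := by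
      intro v hv
      rw [Multiset.filter_cons, Multiset.card_add]
      congr 1
      split <;> simp
    rw [Finset.sum_congr rfl this, Finset.sum_add_distrib]
    congr 1
    rw [Finset.card_filter]

lemma toFinset_sum_le [DecidableEq α] (P : Multiset α) (f : α → ℕ) :
    ∑ x ∈ P.toFinset, f x ≤ (P.map f).sum := by
  induction P using Multiset.induction_on with
  | empty => simp
  | cons a P ih =>
    rw [Multiset.toFinset_cons, Multiset.map_cons, Multiset.sum_cons]
    by_cases ha : a ∈ P.toFinset
    · rw [Finset.insert_eq_self.2 ha]
      omega
    · rw [Finset.sum_insert ha]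
      omega

lemma card_filter_eq_one_of {P : Multiset α} {Q R : α → Prop} [DecidablePred Q] [DecidablePred R]
    (himp : ∀ p, Q p → R p) (hcard : Multiset.card (P.filter R) = 1)
    {x : α} (hx : x ∈ P) (hQx : Q x) : Multiset.card (P.filter Q) = 1 := by
  have hle : P.filter Q ≤ P.filter R := by
    have : P.filter Q = (P.filter R).filter Q := by
      rw [Multiset.filter_filter]
      apply Multiset.filter_congr
      intro p _
      exact ⟨fun h => ⟨h, himp p h⟩, fun h => h.1⟩
    rw [this]
    exact Multiset.filter_le _ _
  have h1 : Multiset.card (P.filter Q) ≤ 1 := hcard ▸ Multiset.card_le_card hle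
  have h2 : x ∈ P.filter Q := Multiset.mem_filter.2 ⟨hx, hQx⟩
  have h3 : 0 < Multiset.card (P.filter Q) := Multiset.card_pos_iff_exists_mem.2 ⟨x, h2⟩
  omega

lemma card_filter_split (P : Multiset α) (Qa Qb : α → Prop) [DecidablePred Qa] [DecidablePred Qb] :
    Multiset.card (P.filter Qb)
      = Multiset.card (P.filter (fun p => Qa p ∧ Qb p))
        + Multiset.card (P.filter (fun p => ¬ Qa p ∧ Qb p)) := by
  induction P using Multiset.induction_on with
  | empty => simp
  | cons a P ih =>
    rw [Multiset.filter_cons, Multiset.filter_cons, Multiset.filter_cons,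
      Multiset.card_add, Multiset.card_add, Multiset.card_add]
    by_cases ha : Qa a <;> by_cases hb : Qb a <;> simp [ha, hb] <;> omega

end MultisetHelpers

/-! ### The path system counting objects -/

section System

set_option linter.unusedSectionVars false

variable {n k : ℕ} [NeZero n]

/-- leaf in the perfect binary tree on `n` vertices -/
def leafN (n c : ℕ) : Prop := n ≤ 2*c+1

variable (P : Multiset (GPath (completeBinaryTree n) × Fin k))

/-- the multiset of paths confined to the subtree at `v` and using a child edge of `v` -/
def Ap (v : ℕ) : Multiset (GPath (completeBinaryTree n) × Fin k) :=
  P.filter (fun p => pe n v ∉ p.1.walk.edges ∧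
    (pe n (2*v+1) ∈ p.1.walk.edges ∨ pe n (2*v+2) ∈ p.1.walk.edges))

/-- the number of paths through the parent edge of `c` -/
def Mp (c : ℕ) : ℕ := Multiset.card (P.filter (fun p => pe n c ∈ p.1.walk.edges))

variable {P}

/-- any member of `Ap P v` has its whole support inside the subtree at `v` -/
lemma Ap_support_desc {v : ℕ} (hv1 : 1 ≤ v) (hvn : 2*v+2 < n)
    {p : GPath (completeBinaryTree n) × Fin k} (hp : p ∈ Ap P v) :
    ∀ u ∈ p.1.walk.support, desc v (u:ℕ) := by
  rw [Ap, Multiset.mem_filter] at hp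
  obtain ⟨hpP, hnpe, hchild⟩ := hp
  rcases hchild with hch | hch
  · have hmem : vf n (2*v+1) ∈ p.1.walk.support :=
      mem_support_of_mem_edge hch (mem_pe_left (by omega))
    have hdesc : desc v ((vf n (2*v+1) : Fin n) : ℕ) := by
      rw [vf_coe (by omega : 2*v+1 < n)]
      exact desc_child (desc_refl v) (Or.inl rfl)
    exact support_desc_of_edges hnpe hmem hdesc
  · have hmem : vf n (2*v+2) ∈ p.1.walk.support :=
      mem_support_of_mem_edge hch (mem_pe_left (by omega))
    have hdesc : desc v ((vf n (2*v+2) : Fin n) : ℕ) := by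
      rw [vf_coe (by omega : 2*v+2 < n)]
      exact desc_child (desc_refl v) (Or.inr rfl)
    exact support_desc_of_edges hnpe hmem hdesc

lemma Ap_vertex_mem {v : ℕ} (hvn : 2*v+2 < n)
    {p : GPath (completeBinaryTree n) × Fin k} (hp : p ∈ Ap P v) :
    vf n v ∈ p.1.walk.support := by
  rw [Ap, Multiset.mem_filter] at hp
  obtain ⟨hpP, hnpe, hchild⟩ := hp
  rcases hchild with hch | hch
  · apply mem_support_of_mem_edge hch
    rw [pe, par_child1]
    exact Sym2.mem_mk_right _ _
  · apply mem_support_of_mem_edge hch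
    rw [pe, par_child2]
    exact Sym2.mem_mk_right _ _

lemma Ap_disjoint {v w : ℕ} (hv1 : 1 ≤ v) (hvn : 2*v+2 < n) (hw1 : 1 ≤ w) (hwn : 2*w+2 < n)
    (hne : v ≠ w) (p : GPath (completeBinaryTree n) × Fin k) :
    ¬ ((pe n v ∉ p.1.walk.edges ∧
        (pe n (2*v+1) ∈ p.1.walk.edges ∨ pe n (2*v+2) ∈ p.1.walk.edges)) ∧
       (pe n w ∉ p.1.walk.edges ∧
        (pe n (2*w+1) ∈ p.1.walk.edges ∨ pe n (2*w+2) ∈ p.1.walk.edges))) := by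
  rintro ⟨hv, hw⟩
  -- fake membership in the filtered multisets of `{p}`
  have hpv : p ∈ Ap ({p} : Multiset _) v := Multiset.mem_filter.2 ⟨Multiset.mem_singleton_self p, hv⟩
  have hpw : p ∈ Ap ({p} : Multiset _) w := Multiset.mem_filter.2 ⟨Multiset.mem_singleton_self p, hw⟩
  have h1 := Ap_support_desc hv1 hvn hpv (vf n w) (Ap_vertex_mem hwn hpw)
  have h2 := Ap_support_desc hw1 hwn hpw (vf n v) (Ap_vertex_mem hvn hpv)
  rw [vf_coe (by omega : w < n)] at h1
  rw [vf_coe (by omega : v < n)] at h2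
  exact hne (desc_antisymm h1 h2)

end System

/-! ### Witness lemmas and the clean-subtree contradiction -/

section Witness

set_option linter.unusedSectionVars false

variable {n k : ℕ} [NeZero n] {P : Multiset (GPath (completeBinaryTree n) × Fin k)}

lemma exists_sep (hP : IsRSPS (completeBinaryTree n) k P) {c c' : ℕ}
    (hc1 : 1 ≤ c) (hc2 : c < n) (hc1' : 1 ≤ c') (hc2' : c' < n) (hne : c ≠ c') :
    ∃ p ∈ P, ∃ q ∈ P, p.2 ≠ q.2 ∧
      pe n c ∈ p.1.walk.edges ∧ pe n c' ∉ p.1.walk.edges ∧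
      pe n c' ∈ q.1.walk.edges ∧ pe n c ∉ q.1.walk.edges :=
  hP (pe n c) (pe n c') (pe_mem_edgeSet hc1 hc2) (pe_mem_edgeSet hc1' hc2')
    (fun h => hne (pe_inj hc1 hc2 hc1' hc2' h))

lemma Ap_pos (hP : IsRSPS (completeBinaryTree n) k P) {v : ℕ}
    (hv1 : 1 ≤ v) (hvn : 2*v+2 < n) : 1 ≤ Multiset.card (Ap P v) := by
  obtain ⟨p, hpP, q, hqP, hpq, hp1, hp2, hq1, hq2⟩ :=
    exists_sep hP (c := 2*v+1) (c' := v) (by omega) (by omega) hv1 (by omega) (by omega)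
  have : p ∈ Ap P v := Multiset.mem_filter.2 ⟨hpP, hp2, Or.inl hp1⟩
  exact Multiset.card_pos_iff_exists_mem.2 ⟨p, this⟩

lemma Ap_one (hP : IsRSPS (completeBinaryTree n) k P) {v : ℕ}
    (hv1 : 1 ≤ v) (hvn : 2*v+2 < n) (hcard : Multiset.card (Ap P v) = 1) :
    ∃ x ∈ P, Ap P v = {x} ∧ pe n (2*v+1) ∈ x.1.walk.edges ∧
      pe n (2*v+2) ∈ x.1.walk.edges ∧ pe n v ∉ x.1.walk.edges := by
  obtain ⟨x, hx⟩ := Multiset.card_eq_one.1 hcard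
  have hxA : x ∈ Ap P v := by rw [hx]; exact Multiset.mem_singleton_self x
  have hxfacts := Multiset.mem_filter.1 hxA
  obtain ⟨p, hpP, q, hqP, hpq, hp1, hp2, hq1, hq2⟩ :=
    exists_sep hP (c := 2*v+1) (c' := v) (by omega) (by omega) hv1 (by omega) (by omega)
  have hpA : p ∈ Ap P v := Multiset.mem_filter.2 ⟨hpP, hp2, Or.inl hp1⟩
  have hpx : p = x := by rw [hx] at hpA; exact Multiset.mem_singleton.1 hpA
  obtain ⟨p', hpP', q', hqP', hpq', hp1', hp2', hq1', hq2'⟩ :=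
    exists_sep hP (c := 2*v+2) (c' := v) (by omega) (by omega) hv1 (by omega) (by omega)
  have hpA' : p' ∈ Ap P v := Multiset.mem_filter.2 ⟨hpP', hp2', Or.inr hp1'⟩
  have hpx' : p' = x := by rw [hx] at hpA'; exact Multiset.mem_singleton.1 hpA'
  exact ⟨x, hxfacts.1, hx, hpx ▸ hp1, hpx' ▸ hp1', hxfacts.2.1⟩

/-- The exactness lemma: in a clean subtree every (downward-closed) edge
carries exactly two paths. -/
lemma M_eq_two (hP : IsRSPS (completeBinaryTree n) k P) (hodd : n % 2 = 1) {b : ℕ}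
    (hb1 : 1 ≤ b)
    (hC1 : ∀ v, desc b v → 2*v+2 < n → Multiset.card (Ap P v) = 1)
    (hC2 : ∀ l, desc b l → l < n → leafN n l → Mp P l = 2)
    (hC3 : ∀ p ∈ P, ∀ v : Fin n, (v = p.1.a ∨ v = p.1.b) → desc b (v:ℕ) →
      (leafN n (v:ℕ) ∧ pe n (v:ℕ) ∈ p.1.walk.edges)) :
    ∀ c, desc b c → c < n → Mp P c = 2 := by
  have main : ∀ m c, n - c ≤ m → desc b c → c < n → Mp P c = 2 := by
    intro m
    induction m with
    | zero => intro c hm hdesc hcn; omega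
    | succ m ih =>
      intro c hm hdesc hcn
      by_cases hleaf : leafN n c
      · exact hC2 c hdesc hcn hleaf
      · -- internal vertex
        rw [leafN, not_le] at hleaf
        have hint : 2*c+2 < n := by omega
        have hc1 : 1 ≤ c := le_trans hb1 (desc_le hdesc)
        obtain ⟨x, hxP, hxA, hxc1, hxc2, hxc⟩ := Ap_one hP hc1 hint (hC1 c hdesc hint)
        -- the two children
        have hd1 : desc b (2*c+1) := desc_child hdesc (Or.inl rfl)
        have hd2 : desc b (2*c+2) := desc_child hdesc (Or.inr rfl)
        have hM1 : Mp P (2*c+1) = 2 := ih (2*c+1) (by omega) hd1 (by omega)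
        have hM2 : Mp P (2*c+2) = 2 := ih (2*c+2) (by omega) hd2 (by omega)
        -- edge distinctness
        have hne1 : pe n c ≠ pe n (2*c+1) := fun h => by
          have := pe_inj hc1 hcn (by omega) (by omega) h; omega
        have hne2 : pe n c ≠ pe n (2*c+2) := fun h => by
          have := pe_inj hc1 hcn (by omega) (by omega) h; omega
        have hne3 : pe n (2*c+1) ≠ pe n (2*c+2) := fun h => by
          have := pe_inj (by omega) (by omega) (by omega) (by omega) h; omega
        -- no path through pe c misses both child edges
        have hz : ∀ p ∈ P, ¬(pe n c ∈ p.1.walk.edges ∧ pe n (2*c+1) ∉ p.1.walk.edges ∧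
            pe n (2*c+2) ∉ p.1.walk.edges) := by
          rintro p hpP ⟨hpc, hpc1, hpc2⟩
          have hvsup : vf n c ∈ p.1.walk.support :=
            mem_support_of_mem_edge hpc (mem_pe_left hcn)
          by_cases hend : vf n c = p.1.a ∨ vf n c = p.1.b
          · have := hC3 p hpP (vf n c) hend (by rw [vf_coe hcn]; exact hdesc)
            rw [vf_coe hcn] at this
            rw [leafN] at this
            omega
          · push_neg at hend
            obtain ⟨e₁, he₁, e₂, he₂, hee, hv1, hv2⟩ :=
              interior_two_edges p.1.isPath hvsup hend.1 hend.2
            have hch : ∀ e ∈ p.1.walk.edges, vf n c ∈ e → e = pe n c := by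
              intro e he hv
              rcases edge_at (p.1.walk.edges_subset_edgeSet he) hv with h | ⟨c', hc', hc'n, rfl⟩
              · rwa [vf_coe hcn] at h
              · exfalso
                rw [vf_coe hcn] at hc'
                rcases hc' with rfl | rfl
                · exact hpc1 he
                · exact hpc2 he
            exact hee ((hch e₁ he₁ hv1).trans (hch e₂ he₂ hv2).symm)
        -- no path contains all three edges
        have hthree : ∀ p ∈ P, ¬(pe n c ∈ p.1.walk.edges ∧ pe n (2*c+1) ∈ p.1.walk.edges ∧
            pe n (2*c+2) ∈ p.1.walk.edges) := by
          rintro p hpP ⟨h1, h2, h3⟩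
          have m1 : vf n c ∈ pe n c := mem_pe_left hcn
          have m2 : vf n c ∈ pe n (2*c+1) := by
            rw [pe, par_child1]; exact Sym2.mem_mk_right _ _
          have m3 : vf n c ∈ pe n (2*c+2) := by
            rw [pe, par_child2]; exact Sym2.mem_mk_right _ _
          rcases three_edges_collide p.1.isPath h1 h2 h3 m1 m2 m3 with h | h | h
          · exact hne1 h
          · exact hne2 h
          · exact hne3 h
        -- counting
        -- notation
        set Q0 : (GPath (completeBinaryTree n) × Fin k) → Prop := fun p => pe n c ∈ p.1.walk.edges with hQ0
        set Q1 : (GPath (completeBinaryTree n) × Fin k) → Prop := fun p => pe n (2*c+1) ∈ p.1.walk.edges with hQ1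
        set Q2 : (GPath (completeBinaryTree n) × Fin k) → Prop := fun p => pe n (2*c+2) ∈ p.1.walk.edges with hQ2
        have split1 : Mp P (2*c+1)
            = Multiset.card (P.filter (fun p => Q0 p ∧ Q1 p))
              + Multiset.card (P.filter (fun p => ¬ Q0 p ∧ Q1 p)) := by
          unfold Mp; exact card_filter_split P Q0 Q1
        have split2 : Mp P (2*c+2)
            = Multiset.card (P.filter (fun p => Q0 p ∧ Q2 p))
              + Multiset.card (P.filter (fun p => ¬ Q0 p ∧ Q2 p)) := by
          unfold Mp; exact card_filter_split P Q0 Q2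
        have split0 : Mp P c
            = Multiset.card (P.filter (fun p => Q1 p ∧ Q0 p))
              + Multiset.card (P.filter (fun p => ¬ Q1 p ∧ Q0 p)) := by
          unfold Mp; exact card_filter_split P Q1 Q0
        have hone1 : Multiset.card (P.filter (fun p => ¬ Q0 p ∧ Q1 p)) = 1 := by
          apply card_filter_eq_one_of (R := fun p => pe n c ∉ p.1.walk.edges ∧
            (pe n (2*c+1) ∈ p.1.walk.edges ∨ pe n (2*c+2) ∈ p.1.walk.edges))
          · rintro p ⟨h1, h2⟩; exact ⟨h1, Or.inl h2⟩
          · exact hC1 c hdesc hint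
          · exact hxP
          · exact ⟨hxc, hxc1⟩
        have hone2 : Multiset.card (P.filter (fun p => ¬ Q0 p ∧ Q2 p)) = 1 := by
          apply card_filter_eq_one_of (R := fun p => pe n c ∉ p.1.walk.edges ∧
            (pe n (2*c+1) ∈ p.1.walk.edges ∨ pe n (2*c+2) ∈ p.1.walk.edges))
          · rintro p ⟨h1, h2⟩; exact ⟨h1, Or.inr h2⟩
          · exact hC1 c hdesc hint
          · exact hxP
          · exact ⟨hxc, hxc2⟩
        have heq1 : P.filter (fun p => ¬ Q1 p ∧ Q0 p) = P.filter (fun p => Q0 p ∧ Q2 p) := by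
          apply Multiset.filter_congr
          intro p hp
          constructor
          · rintro ⟨h1, h0⟩
            refine ⟨h0, ?_⟩
            by_contra h2
            exact hz p hp ⟨h0, h1, h2⟩
          · rintro ⟨h0, h2⟩
            refine ⟨fun h1 => hthree p hp ⟨h0, h1, h2⟩, h0⟩
        have heq2 : P.filter (fun p => Q1 p ∧ Q0 p) = P.filter (fun p => Q0 p ∧ Q1 p) := by
          apply Multiset.filter_congr; intro p _; exact and_comm
        rw [split0, heq1, heq2]
        omega
  exact fun c hdesc hcn => main (n - c) c le_rfl hdesc hcn

end Witness

/-! ### The contradiction within a clean subtree -/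

section Spine

set_option linter.unusedSectionVars false

variable {n k : ℕ} [NeZero n] {P : Multiset (GPath (completeBinaryTree n) × Fin k)}

lemma clean_contra (hP : IsRSPS (completeBinaryTree n) k P) {b d h : ℕ}
    (hd1 : 1 ≤ d) (hh1 : 1 ≤ h) (hn1 : n + 1 = 2^(d + h + 1)) (hhk : h = k + 1)
    (hlow : 2^d ≤ b + 1) (hhigh : b + 1 < 2^(d+1))
    (hC1 : ∀ v, desc b v → 2*v+2 < n → Multiset.card (Ap P v) = 1)
    (hC2 : ∀ l, desc b l → l < n → leafN n l → Mp P l = 2)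
    (hC3 : ∀ p ∈ P, ∀ v : Fin n, (v = p.1.a ∨ v = p.1.b) → desc b (v:ℕ) →
      (leafN n (v:ℕ) ∧ pe n (v:ℕ) ∈ p.1.walk.edges)) : False := by
  have hpow : ∀ a b' : ℕ, a ≤ b' → (2:ℕ)^a ≤ 2^b' := fun a b' hab =>
    Nat.pow_le_pow_right (by norm_num) hab
  have hodd : n % 2 = 1 := by
    have : n + 1 = 2 * 2^(d+h) := by rw [hn1, pow_succ]; ring
    omega
  have h2d : 2 ≤ 2^d := hpow 1 d hd1
  have hb1 : 1 ≤ b := by omega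
  have hbint : 2*b+2 < n := by
    have h1 : 2*(b+1) ≤ 2^(d+2) - 2 := by
      have : 2^(d+2) = 2 * 2^(d+1) := by rw [pow_succ]; ring
      omega
    have h2 : (2:ℕ)^(d+2) ≤ 2^(d+h+1) := hpow (d+2) (d+h+1) (by omega)
    omega
  obtain ⟨x, hxP, hxA, hx1, hx2, hx0⟩ := Ap_one hP hb1 hbint (hC1 b (desc_refl b) hbint)
  have M2 := M_eq_two hP hodd hb1 hC1 hC2 hC3
  have hxmem : x ∈ Ap P b := by rw [hxA]; exact Multiset.mem_singleton_self x
  have hsup : ∀ u ∈ x.1.walk.support, desc b (u:ℕ) := Ap_support_desc hb1 hbint hxmem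
  have hendA := hC3 x hxP x.1.a (Or.inl rfl) (hsup _ x.1.walk.start_mem_support)
  have hendB := hC3 x hxP x.1.b (Or.inr rfl) (hsup _ x.1.walk.end_mem_support)
  -- the spine invariant
  set inv : ℕ → ℕ → Prop := fun j w =>
    2^j*(b+1) ≤ w+1 ∧ w+1 < 2^j*(b+2) ∧ desc b w ∧ pe n w ∈ x.1.walk.edges with hinv
  have spine : ∀ i, i < h → ∃ w, inv (i+1) w := by
    intro i
    induction i with
    | zero =>
      intro _
      refine ⟨2*b+1, ?_, ?_, desc_child (desc_refl b) (Or.inl rfl), hx1⟩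
      · rw [pow_one]; omega
      · rw [pow_one]; omega
    | succ i ih =>
      intro hlt
      obtain ⟨w, hw1, hw2, hw3, hw4⟩ := ih (by omega)
      -- w is internal
      have hbb : b + 2 ≤ 2^(d+1) := by omega
      have hwn' : w + 1 < 2^(d+i+2) := by
        calc w + 1 < 2^(i+1)*(b+2) := hw2
        _ ≤ 2^(i+1) * 2^(d+1) := Nat.mul_le_mul_left _ hbb
        _ = 2^(d+i+2) := by rw [← pow_add]; ring_nf
      have hwint : 2*w+2 < n := by
        have h2 : (2:ℕ)^(d+i+2) ≤ 2^(d+h) := hpow (d+i+2) (d+h) (by omega)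
        have : 2*(w+1) < 2 * 2^(d+h) := by omega
        have hexp : n + 1 = 2 * 2^(d+h) := by rw [hn1, pow_succ]; ring
        omega
      have hw1' : 1 ≤ w := by
        have : 2^(i+1) ≥ 2 := hpow 1 (i+1) (by omega)
        nlinarith
      have hwn : w < n := by omega
      have hwsup : vf n w ∈ x.1.walk.support := mem_support_of_mem_edge hw4 (mem_pe_left hwn)
      have hnea : vf n w ≠ x.1.a := by
        intro hEq
        have := hendA.1
        rw [← hEq, vf_coe hwn, leafN] at this
        omega
      have hneb : vf n w ≠ x.1.b := by
        intro hEq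
        have := hendB.1
        rw [← hEq, vf_coe hwn, leafN] at this
        omega
      obtain ⟨e₁, he₁, e₂, he₂, hee, hv1, hv2⟩ :=
        interior_two_edges x.1.isPath hwsup hnea hneb
      have hpick : ∃ e ∈ x.1.walk.edges, vf n w ∈ e ∧ e ≠ pe n w := by
        by_cases h1 : e₁ = pe n w
        · exact ⟨e₂, he₂, hv2, by rw [← h1]; exact fun hc => hee hc.symm⟩
        · exact ⟨e₁, he₁, hv1, h1⟩
      obtain ⟨e, he, hve, hene⟩ := hpick
      rcases edge_at (x.1.walk.edges_subset_edgeSet he) hve with hcase | ⟨c, hc, hcn, rfl⟩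
      · rw [vf_coe hwn] at hcase
        exact absurd hcase hene
      · rw [vf_coe hwn] at hc
        refine ⟨c, ?_, ?_, desc_child hw3 hc, he⟩
        · have : 2^(i+1+1)*(b+1) = 2*(2^(i+1)*(b+1)) := by rw [pow_succ]; ring
          omega
        · have : 2^(i+1+1)*(b+2) = 2*(2^(i+1)*(b+2)) := by rw [pow_succ]; ring
          omega
  choose W hW using spine
  have hfh : ∀ j : Fin h, (j:ℕ) < h := fun j => j.isLt
  set wf : Fin h → ℕ := fun j => W j (hfh j) with hwf
  have hwfinv : ∀ j : Fin h, inv ((j:ℕ)+1) (wf j) := fun j => hW j (hfh j)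
  have hwfn : ∀ j : Fin h, wf j < n ∧ 1 ≤ wf j := by
    intro j
    obtain ⟨h1', h2', h3', h4'⟩ := hwfinv j
    constructor
    · have hbb : b + 2 ≤ 2^(d+1) := by omega
      have : wf j + 1 < 2^((j:ℕ)+1) * 2^(d+1) :=
        lt_of_lt_of_le h2' (Nat.mul_le_mul_left _ hbb)
      have h5 : 2^((j:ℕ)+1) * 2^(d+1) = 2^(d+(j:ℕ)+2) := by rw [← pow_add]; ring_nf
      have h6 : (2:ℕ)^(d+(j:ℕ)+2) ≤ 2^(d+h+1) := hpow _ _ (by have := j.isLt; omega)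
      omega
    · have h7 : 2^((j:ℕ)+1) ≥ 2 := hpow 1 _ (by omega)
      nlinarith
  have hmono : ∀ i j : Fin h, i < j → wf i < wf j := by
    intro i j hij
    obtain ⟨hi1, hi2, _, _⟩ := hwfinv i
    obtain ⟨hj1, hj2, _, _⟩ := hwfinv j
    have hle : 2^((i:ℕ)+1)*(b+2) ≤ 2^((j:ℕ)+1)*(b+1) := by
      calc 2^((i:ℕ)+1)*(b+2) ≤ 2^((i:ℕ)+1)*(2*(b+1)) := Nat.mul_le_mul_left _ (by omega)
      _ = 2^((i:ℕ)+2)*(b+1) := by rw [pow_succ]; ring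
      _ ≤ 2^((j:ℕ)+1)*(b+1) := Nat.mul_le_mul_right _ (hpow _ _ (by
          have : (i:ℕ) < (j:ℕ) := hij
          omega))
    omega
  have yex : ∀ j : Fin h, ∃ y, P.filter (fun p => pe n (wf j) ∈ p.1.walk.edges) = x ::ₘ {y} := by
    intro j
    have hxf : x ∈ P.filter (fun p => pe n (wf j) ∈ p.1.walk.edges) :=
      Multiset.mem_filter.2 ⟨hxP, (hwfinv j).2.2.2⟩
    obtain ⟨t, ht⟩ := Multiset.exists_cons_of_mem hxf
    have hcard : Mp P (wf j) = 2 := M2 (wf j) (hwfinv j).2.2.1 (hwfn j).1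
    rw [Mp, ht] at hcard
    simp only [Multiset.card_cons] at hcard
    obtain ⟨y, hy⟩ := Multiset.card_eq_one.1 (by omega : Multiset.card t = 1)
    exact ⟨y, by rw [ht, hy]⟩
  choose Y hY using yex
  have hcolor : ∀ i j : Fin h, i < j → (Y i).2 ≠ (Y j).2 := by
    intro i j hij
    have hne : wf i ≠ wf j := fun hEq => absurd hEq (Nat.ne_of_lt (hmono i j hij))
    obtain ⟨p, hpP, q, hqP, hpq, hp1, hp2, hq1, hq2⟩ :=
      exists_sep hP (c := wf j) (c' := wf i) (hwfn j).2 (hwfn j).1 (hwfn i).2 (hwfn i).1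
        (Ne.symm hne)
    -- p ∈ filter j, p ≠ x since x contains pe (wf i)
    have hpf : p ∈ P.filter (fun p => pe n (wf j) ∈ p.1.walk.edges) :=
      Multiset.mem_filter.2 ⟨hpP, hp1⟩
    rw [hY j] at hpf
    have hpeq : p = Y j := by
      rcases Multiset.mem_cons.1 hpf with hc | hc
      · exfalso; rw [hc] at hp2; exact hp2 (hwfinv i).2.2.2
      · exact Multiset.mem_singleton.1 hc
    have hqf : q ∈ P.filter (fun p => pe n (wf i) ∈ p.1.walk.edges) :=
      Multiset.mem_filter.2 ⟨hqP, hq1⟩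
    rw [hY i] at hqf
    have hqeq : q = Y i := by
      rcases Multiset.mem_cons.1 hqf with hc | hc
      · exfalso; rw [hc] at hq2; exact hq2 (hwfinv j).2.2.2
      · exact Multiset.mem_singleton.1 hc
    rw [hpeq] at hpq
    rw [hqeq] at hpq
    exact fun hcc => hpq (hcc.symm)
  have hinj : Function.Injective (fun j : Fin h => (Y j).2) := by
    intro i j hEq
    by_contra hne
    rcases lt_or_gt_of_ne (fun hc : i = j => hne hc) with hlt | hgt
    · exact hcolor i j hlt hEq
    · exact hcolor j i hgt hEq.symm
  have := Fintype.card_le_of_injective _ hinj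
  simp only [Fintype.card_fin] at this
  omega

end Spine

/-! ### Budgets and locating a clean subtree -/

section Budget

set_option linter.unusedSectionVars false

variable {n k : ℕ} [NeZero n] {P : Multiset (GPath (completeBinaryTree n) × Fin k)}

/-- a path through a leaf edge ends at the leaf -/
lemma leaf_endpoint {p : GPath (completeBinaryTree n) × Fin k} {l : ℕ}
    (hl : leafN n l) (hln : l < n) (hmem : pe n l ∈ p.1.walk.edges) :
    vf n l = p.1.a ∨ vf n l = p.1.b := by
  by_contra hcon
  push_neg at hcon
  have hsup : vf n l ∈ p.1.walk.support := mem_support_of_mem_edge hmem (mem_pe_left hln)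
  obtain ⟨e₁, he₁, e₂, he₂, hee, hv1, hv2⟩ :=
    interior_two_edges p.1.isPath hsup hcon.1 hcon.2
  have hch : ∀ e ∈ p.1.walk.edges, vf n l ∈ e → e = pe n l := by
    intro e he hv
    rcases edge_at (p.1.walk.edges_subset_edgeSet he) hv with h | ⟨c', hc', hc'n, rfl⟩
    · rwa [vf_coe hln] at h
    · exfalso
      rw [vf_coe hln] at hc'
      rw [leafN] at hl
      omega
  exact hee ((hch e₁ he₁ hv1).trans (hch e₂ he₂ hv2).symm)

/-- good leaf-slots of a path -/
def goodF (P : Multiset (GPath (completeBinaryTree n) × Fin k)) (r : ℕ)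
    (p : GPath (completeBinaryTree n) × Fin k) : Finset ℕ :=
  (Finset.Ico (2^(r-1) - 1) n).filter (fun l => pe n l ∈ p.1.walk.edges)

instance : DecidablePred (leafN n) := fun c => by unfold leafN; infer_instance

/-- bad end-slots of a path -/
def badF (p : GPath (completeBinaryTree n) × Fin k) : Finset ℕ :=
  ({((p.1.a : Fin n) : ℕ), ((p.1.b : Fin n) : ℕ)} : Finset ℕ).filter
    (fun v => ¬(leafN n v ∧ pe n v ∈ p.1.walk.edges))

lemma leaves_mem_iff {r l : ℕ} (hr1 : 1 ≤ r) (hn1 : n + 1 = 2^r) :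
    l ∈ Finset.Ico (2^(r-1) - 1) n ↔ (leafN n l ∧ l < n) := by
  have h2 : 2^r = 2 * 2^(r-1) := by
    rw [← pow_succ']
    congr 1
    omega
  rw [Finset.mem_Ico, leafN]
  omega

lemma goodbad_le_two {r : ℕ} (hr1 : 1 ≤ r) (hn1 : n + 1 = 2^r)
    (p : GPath (completeBinaryTree n) × Fin k) :
    (goodF P r p).card + (badF p).card ≤ 2 := by
  classical
  have hpair : ({((p.1.a : Fin n) : ℕ), ((p.1.b : Fin n) : ℕ)} : Finset ℕ).card ≤ 2 := by
    apply le_trans (Finset.card_insert_le _ _)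
    simp
  have hgood : goodF P r p ⊆ ({((p.1.a : Fin n) : ℕ), ((p.1.b : Fin n) : ℕ)} : Finset ℕ) := by
    intro l hlmem
    rw [goodF, Finset.mem_filter] at hlmem
    obtain ⟨hl1, hl2⟩ := hlmem
    rw [leaves_mem_iff hr1 hn1] at hl1
    rcases leaf_endpoint hl1.1 hl1.2 hl2 with h | h
    · have : l = ((p.1.a : Fin n) : ℕ) := by rw [← h, vf_coe hl1.2]
      simp [this]
    · have : l = ((p.1.b : Fin n) : ℕ) := by rw [← h, vf_coe hl1.2]
      simp [this]
  have hdisj : Disjoint (goodF P r p) (badF p) := by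
    rw [Finset.disjoint_left]
    intro l hlg hlb
    rw [goodF, Finset.mem_filter] at hlg
    rw [badF, Finset.mem_filter] at hlb
    obtain ⟨hl1, hl2⟩ := hlg
    rw [leaves_mem_iff hr1 hn1] at hl1
    exact hlb.2 ⟨hl1.1, hl2⟩
  have hunion : (goodF P r p).card + (badF p).card = ((goodF P r p) ∪ (badF p)).card :=
    (Finset.card_union_of_disjoint hdisj).symm
  rw [hunion]
  apply le_trans (Finset.card_le_card ?_) hpair
  intro l hl
  rcases Finset.mem_union.1 hl with h | h
  · exact hgood h
  · exact (Finset.mem_filter.1 h).1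

/-- Fubini for leaf degrees -/
lemma sum_Mp_leaves (r : ℕ) :
    ∑ l ∈ Finset.Ico (2^(r-1) - 1) n, Mp P l
      = (P.map (fun p => (goodF P r p).card)).sum := by
  unfold Mp goodF
  exact fubini_card_filter P _ _

end Budget

/-! ### remaining budget lemmas -/

section Budget2

set_option linter.unusedSectionVars false
attribute [local instance 0] Classical.propDecidable

variable {n k : ℕ} [NeZero n] {P : Multiset (GPath (completeBinaryTree n) × Fin k)}

/-- sum of `Ap` cards over internal non-root vertices is at most `|P|` -/
lemma sum_Ap_le {r : ℕ} (hr2 : 2 ≤ r) (hn1 : n + 1 = 2^r) :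
    ∑ v ∈ Finset.Ico 1 (2^(r-1) - 1), Multiset.card (Ap P v) ≤ Multiset.card P := by
  have h2 : 2^r = 2 * 2^(r-1) := by
    rw [← pow_succ']; congr 1; omega
  have hL : 2 ≤ 2^(r-1) := by
    calc (2:ℕ) = 2^1 := (pow_one 2).symm
    _ ≤ 2^(r-1) := Nat.pow_le_pow_right (by norm_num) (by omega)
  unfold Ap
  apply sum_card_filter_le
  intro v hv w hw hne p
  rw [Finset.mem_Ico] at hv hw
  exact Ap_disjoint (by omega) (by omega) (by omega) (by omega) hne p

lemma V1_bound (hP : IsRSPS (completeBinaryTree n) k P) {r : ℕ} (hr2 : 2 ≤ r)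
    (hn1 : n + 1 = 2^r) :
    (2^(r-1) - 2) + ((Finset.Ico 1 (2^(r-1) - 1)).filter
        (fun v => 2 ≤ Multiset.card (Ap P v))).card ≤ Multiset.card P := by
  classical
  have h2 : 2^r = 2 * 2^(r-1) := by rw [← pow_succ']; congr 1; omega
  have hL : 2 ≤ 2^(r-1) := by
    calc (2:ℕ) = 2^1 := (pow_one 2).symm
    _ ≤ 2^(r-1) := Nat.pow_le_pow_right (by norm_num) (by omega)
  set IN := Finset.Ico 1 (2^(r-1) - 1) with hIN
  set V1 := IN.filter (fun v => 2 ≤ Multiset.card (Ap P v)) with hV1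
  have hsplit : V1.card + (IN.filter (fun v => ¬ 2 ≤ Multiset.card (Ap P v))).card = IN.card :=
    Finset.card_filter_add_card_filter_not _
  have hs1 : V1.card • 2 ≤ ∑ v ∈ V1, Multiset.card (Ap P v) :=
    Finset.card_nsmul_le_sum _ _ _ (fun v hv => (Finset.mem_filter.1 hv).2)
  have hs2 : (IN.filter (fun v => ¬ 2 ≤ Multiset.card (Ap P v))).card • 1
      ≤ ∑ v ∈ IN.filter (fun v => ¬ 2 ≤ Multiset.card (Ap P v)), Multiset.card (Ap P v) := by
    apply Finset.card_nsmul_le_sum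
    intro v hv
    have hv' := Finset.mem_filter.1 hv |>.1
    rw [hIN, Finset.mem_Ico] at hv'
    exact Ap_pos hP (by omega) (by omega)
  have hss : ∑ v ∈ V1, Multiset.card (Ap P v)
      + ∑ v ∈ IN.filter (fun v => ¬ 2 ≤ Multiset.card (Ap P v)), Multiset.card (Ap P v)
      = ∑ v ∈ IN, Multiset.card (Ap P v) := Finset.sum_filter_add_sum_filter_not _ _ _
  have htot := sum_Ap_le (P := P) hr2 hn1
  rw [← hIN] at htot
  have hINcard : IN.card = 2^(r-1) - 2 := by rw [hIN, Nat.card_Ico]; omega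
  simp only [smul_eq_mul] at hs1 hs2
  omega

/-- at most `k` leaves of low degree -/
lemma V2a_bound (hk1 : 1 ≤ k) (hP : IsRSPS (completeBinaryTree n) k P) {r : ℕ} (hr2 : 2 ≤ r)
    (hn1 : n + 1 = 2^r) :
    ((Finset.Ico (2^(r-1) - 1) n).filter (fun l => Mp P l ≤ 1)).card ≤ k := by
  classical
  have h2 : 2^r = 2 * 2^(r-1) := by rw [← pow_succ']; congr 1; omega
  have hL : 2 ≤ 2^(r-1) := by
    calc (2:ℕ) = 2^1 := (pow_one 2).symm
    _ ≤ 2^(r-1) := Nat.pow_le_pow_right (by norm_num) (by omega)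
  set L := 2^(r-1) with hLdef
  -- the selection function
  set f : ℕ → Fin k := fun l =>
    if hh : ∃ p, p ∈ P ∧ pe n l ∈ p.1.walk.edges then (Classical.choose hh).2
    else ⟨0, by omega⟩ with hf
  have key : ∀ l ∈ (Finset.Ico (L - 1) n).filter (fun l => Mp P l ≤ 1),
      ∀ l' ∈ (Finset.Ico (L - 1) n).filter (fun l' => Mp P l' ≤ 1), l ≠ l' → f l ≠ f l' := by
    intro l hl l' hl' hne
    rw [Finset.mem_filter, Finset.mem_Ico] at hl hl'
    have hl1 : 1 ≤ l := by omega
    have hln : l < n := hl.1.2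
    have hl1' : 1 ≤ l' := by omega
    have hln' : l' < n := hl'.1.2
    obtain ⟨p, hpP, q, hqP, hpq, hp1, hp2, hq1, hq2⟩ :=
      exists_sep hP hl1 hln hl1' hln' hne
    have hex : ∃ p, p ∈ P ∧ pe n l ∈ p.1.walk.edges := ⟨p, hpP, hp1⟩
    have hex' : ∃ p, p ∈ P ∧ pe n l' ∈ p.1.walk.edges := ⟨q, hqP, hq1⟩
    -- the filter multiset has exactly one element
    have hone : ∀ (c : ℕ), 1 ≤ c → c < n → Mp P c ≤ 1 →
        (∃ pp, pp ∈ P ∧ pe n c ∈ pp.1.walk.edges) →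
        ∀ u u', u ∈ P → pe n c ∈ u.1.walk.edges → u' ∈ P → pe n c ∈ u'.1.walk.edges →
          u = u' := by
      intro c hc1 hcn hM hex u u' hu hue hu' hue'
      have humem : u ∈ P.filter (fun p => pe n c ∈ p.1.walk.edges) :=
        Multiset.mem_filter.2 ⟨hu, hue⟩
      have humem' : u' ∈ P.filter (fun p => pe n c ∈ p.1.walk.edges) :=
        Multiset.mem_filter.2 ⟨hu', hue'⟩
      have hMle : Multiset.card (P.filter (fun p => pe n c ∈ p.1.walk.edges)) ≤ 1 := hM
      have hcd : Multiset.card (P.filter (fun p => pe n c ∈ p.1.walk.edges)) = 1 := by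
        have h1 : 1 ≤ Multiset.card (P.filter (fun p => pe n c ∈ p.1.walk.edges)) :=
          Multiset.card_pos_iff_exists_mem.2 ⟨u, humem⟩
        omega
      obtain ⟨z, hz⟩ := Multiset.card_eq_one.1 hcd
      rw [hz] at humem humem'
      rw [Multiset.mem_singleton.1 humem, Multiset.mem_singleton.1 humem']
    have hch := Classical.choose_spec hex
    have hch' := Classical.choose_spec hex'
    have hpeq : Classical.choose hex = p := hone l hl1 hln hl.2 hex _ _ hch.1 hch.2 hpP hp1
    have hqeq : Classical.choose hex' = q := hone l' hl1' hln' hl'.2 hex' _ _ hch'.1 hch'.2 hqP hq1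
    intro hcontra
    rw [hf] at hcontra
    simp only [dif_pos hex, dif_pos hex'] at hcontra
    rw [hpeq, hqeq] at hcontra
    exact hpq hcontra
  have hinj : Set.InjOn f ((Finset.Ico (L - 1) n).filter (fun l => Mp P l ≤ 1)) := by
    intro a ha b hb hab
    by_contra hne
    exact key a (by simpa using ha) b (by simpa using hb) hne hab
  have := Finset.card_le_card_of_injOn f (fun a _ => Finset.mem_univ (f a)) hinj
  simpa using this

/-- the pointwise degree inequality summed over leaves -/
lemma V2_sum_bound {r : ℕ} (hr2 : 2 ≤ r) (hn1 : n + 1 = 2^r) :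
    2 * 2^(r-1) + ((Finset.Ico (2^(r-1) - 1) n).filter (fun l => 3 ≤ Mp P l)).card
      ≤ (∑ l ∈ Finset.Ico (2^(r-1) - 1) n, Mp P l)
        + 2 * ((Finset.Ico (2^(r-1) - 1) n).filter (fun l => Mp P l ≤ 1)).card := by
  classical
  have h2 : 2^r = 2 * 2^(r-1) := by rw [← pow_succ']; congr 1; omega
  set L := 2^(r-1) with hLdef
  set s := Finset.Ico (L - 1) n with hs
  have hcard : s.card = L := by
    rw [hs, Nat.card_Ico]
    have hL : 2 ≤ L := by
      rw [hLdef]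
      calc (2:ℕ) = 2^1 := (pow_one 2).symm
      _ ≤ 2^(r-1) := Nat.pow_le_pow_right (by norm_num) (by omega)
    omega
  have hpoint : ∀ l ∈ s, 2 + (if 3 ≤ Mp P l then 1 else 0)
      ≤ Mp P l + 2 * (if Mp P l ≤ 1 then 1 else 0) := by
    intro l _
    split_ifs <;> omega
  have hsum := Finset.sum_le_sum hpoint
  rw [Finset.sum_add_distrib, Finset.sum_add_distrib, Finset.sum_const, ← Finset.mul_sum,
    ← Finset.card_filter, ← Finset.card_filter] at hsum
  simp only [smul_eq_mul, hcard] at hsum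
  omega

/-- total leaf degree is at most twice the number of paths; and the bad-slot count -/
lemma V3_bound {r : ℕ} (hr1 : 1 ≤ r) (hn1 : n + 1 = 2^r) :
    ((Finset.range n).filter (fun v => ∃ p ∈ P,
        ((v = ((p.1.a : Fin n) : ℕ) ∨ v = ((p.1.b : Fin n) : ℕ)) ∧
         ¬(leafN n v ∧ pe n v ∈ p.1.walk.edges)))).card
      + (∑ l ∈ Finset.Ico (2^(r-1) - 1) n, Mp P l)
      ≤ 2 * Multiset.card P := by
  classical
  set V3 := (Finset.range n).filter (fun v => ∃ p ∈ P,
      ((v = ((p.1.a : Fin n) : ℕ) ∨ v = ((p.1.b : Fin n) : ℕ)) ∧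
       ¬(leafN n v ∧ pe n v ∈ p.1.walk.edges))) with hV3
  have hsub : V3 ⊆ P.toFinset.biUnion badF := by
    intro v hv
    rw [hV3, Finset.mem_filter] at hv
    obtain ⟨hvr, p, hpP, hvp, hbad⟩ := hv
    apply Finset.mem_biUnion.2
    refine ⟨p, Multiset.mem_toFinset.2 hpP, ?_⟩
    rw [badF, Finset.mem_filter]
    constructor
    · rcases hvp with h | h <;> simp [h]
    · exact hbad
  have h1 : V3.card ≤ ∑ p ∈ P.toFinset, (badF p).card :=
    le_trans (Finset.card_le_card hsub) (Finset.card_biUnion_le)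
  have h2 : ∑ p ∈ P.toFinset, (badF p).card ≤ (P.map (fun p => (badF p).card)).sum :=
    toFinset_sum_le P _
  have h3 : (P.map (fun p => (goodF P r p).card)).sum + (P.map (fun p => (badF p).card)).sum
      ≤ 2 * Multiset.card P := by
    have := Multiset.sum_map_le_sum_map (s := P)
      (fun p => (goodF P r p).card + (badF p).card) (fun _ => 2)
      (fun p _ => goodbad_le_two hr1 hn1 p)
    rw [Multiset.sum_map_add] at this
    rw [Multiset.map_const', Multiset.sum_replicate, smul_eq_mul] at this
    omega
  have h4 := sum_Mp_leaves (P := P) (r := r)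
  omega

end Budget2

/-! ### The main counting bound -/

section Main

set_option linter.unusedSectionVars false
attribute [local instance 0] Classical.propDecidable

variable {n k : ℕ} [NeZero n] {P : Multiset (GPath (completeBinaryTree n) × Fin k)}

lemma main_bound (hk : 2 ≤ k) {r : ℕ} (hr : 8*k + 50 ≤ r) (hn1 : n + 1 = 2^r)
    (hP : IsRSPS (completeBinaryTree n) k P) :
    2^(r-1) * (16^(k+6) + 1) ≤ 16^(k+6) * Multiset.card P := by
  by_contra hcon
  push_neg at hcon
  set d := r - k - 2 with hd
  have hd1 : 7*k + 48 ≤ d := by omega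
  have hr2 : 2 ≤ r := by omega
  have h2r : 2^r = 2 * 2^(r-1) := by rw [← pow_succ']; congr 1; omega
  have hL2 : (2:ℕ) ≤ 2^(r-1) := by
    calc (2:ℕ) = 2^1 := (pow_one 2).symm
    _ ≤ 2^(r-1) := Nat.pow_le_pow_right (by norm_num) (by omega)
  have h2d2 : (2:ℕ) ≤ 2^d := by
    calc (2:ℕ) = 2^1 := (pow_one 2).symm
    _ ≤ 2^d := Nat.pow_le_pow_right (by norm_num) (by omega)
  set R := Finset.Ico (2^d - 1) (2^(d+1) - 1) with hR
  set V1 := (Finset.Ico 1 (2^(r-1) - 1)).filter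
    (fun v => 2 ≤ Multiset.card (Ap P v)) with hV1
  set V2a := (Finset.Ico (2^(r-1) - 1) n).filter (fun l => Mp P l ≤ 1) with hV2a
  set V2b := (Finset.Ico (2^(r-1) - 1) n).filter (fun l => 3 ≤ Mp P l) with hV2b
  set V3 := (Finset.range n).filter (fun v => ∃ p ∈ P,
      ((v = ((p.1.a : Fin n) : ℕ) ∨ v = ((p.1.b : Fin n) : ℕ)) ∧
       ¬(leafN n v ∧ pe n v ∈ p.1.walk.edges))) with hV3
  set Vbad := ((V1 ∪ V2a) ∪ V2b) ∪ V3 with hVbad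
  by_cases hclean : ∃ b ∈ R, ((∀ v, desc b v → 2*v+2 < n → Multiset.card (Ap P v) = 1) ∧
      (∀ l, desc b l → l < n → leafN n l → Mp P l = 2) ∧
      (∀ p ∈ P, ∀ v : Fin n, (v = p.1.a ∨ v = p.1.b) → desc b (v:ℕ) →
        (leafN n (v:ℕ) ∧ pe n (v:ℕ) ∈ p.1.walk.edges)))
  · obtain ⟨b, hbR, hC1, hC2, hC3⟩ := hclean
    rw [hR, Finset.mem_Ico] at hbR
    exact clean_contra hP (d := d) (h := k+1) (by omega) (by omega)
      (by rw [hn1]; congr 1; omega) rfl (by omega) (by omega) hC1 hC2 hC3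
  · have hwit : ∀ b ∈ R, ∃ v ∈ Vbad, desc b v := by
      intro b hbR
      have hbR' := hbR
      rw [hR, Finset.mem_Ico] at hbR'
      have hb1 : 1 ≤ b := by omega
      have hfail : ¬((∀ v, desc b v → 2*v+2 < n → Multiset.card (Ap P v) = 1) ∧
          (∀ l, desc b l → l < n → leafN n l → Mp P l = 2) ∧
          (∀ p ∈ P, ∀ v : Fin n, (v = p.1.a ∨ v = p.1.b) → desc b (v:ℕ) →
            (leafN n (v:ℕ) ∧ pe n (v:ℕ) ∈ p.1.walk.edges))) :=
        fun hcc => hclean ⟨b, hbR, hcc⟩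
      by_cases hc1 : ∀ v, desc b v → 2*v+2 < n → Multiset.card (Ap P v) = 1
      · by_cases hc2 : ∀ l, desc b l → l < n → leafN n l → Mp P l = 2
        · by_cases hc3 : ∀ p ∈ P, ∀ v : Fin n, (v = p.1.a ∨ v = p.1.b) → desc b (v:ℕ) →
              (leafN n (v:ℕ) ∧ pe n (v:ℕ) ∈ p.1.walk.edges)
          · exact absurd ⟨hc1, hc2, hc3⟩ hfail
          · push_neg at hc3
            obtain ⟨p, hpP, v, hv, hdesc, hbad⟩ := hc3
            refine ⟨(v:ℕ), ?_, hdesc⟩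
            rw [hVbad]
            apply Finset.mem_union_right
            rw [hV3, Finset.mem_filter]
            refine ⟨Finset.mem_range.2 v.isLt, p, hpP, ?_, fun hab => hbad hab.1 hab.2⟩
            rcases hv with h | h
            · exact Or.inl (by rw [h])
            · exact Or.inr (by rw [h])
        · push_neg at hc2
          obtain ⟨l, hdesc, hln, hleaf, hM⟩ := hc2
          refine ⟨l, ?_, hdesc⟩
          rw [hVbad]
          apply Finset.mem_union_left
          have hlmem : l ∈ Finset.Ico (2^(r-1) - 1) n := by
            rw [leaves_mem_iff (by omega : 1 ≤ r) hn1]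
            exact ⟨hleaf, hln⟩
          rcases Nat.lt_or_ge (Mp P l) 2 with hm | hm
          · apply Finset.mem_union_left
            apply Finset.mem_union_right
            rw [hV2a, Finset.mem_filter]
            exact ⟨hlmem, by omega⟩
          · apply Finset.mem_union_right
            rw [hV2b, Finset.mem_filter]
            exact ⟨hlmem, by omega⟩
      · push_neg at hc1
        obtain ⟨v, hdesc, hvn, hcard⟩ := hc1
        have hv1 : 1 ≤ v := le_trans hb1 (desc_le hdesc)
        have hpos := Ap_pos hP hv1 hvn
        refine ⟨v, ?_, hdesc⟩
        rw [hVbad]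
        apply Finset.mem_union_left
        apply Finset.mem_union_left
        apply Finset.mem_union_left
        rw [hV1, Finset.mem_filter, Finset.mem_Ico]
        refine ⟨⟨hv1, by omega⟩, by omega⟩
    -- pigeonhole: an injection from R into Vbad
    set f : ℕ → ℕ := fun b => if hb : ∃ v ∈ Vbad, desc b v then Classical.choose hb else 0
      with hf
    have hfmem : ∀ b ∈ R, f b ∈ Vbad ∧ desc b (f b) := by
      intro b hbR
      have hb := hwit b hbR
      rw [hf]
      simp only [dif_pos hb]
      exact Classical.choose_spec hb
    have hinj : Set.InjOn f R := by
      intro b hbmem b' hbmem' hEq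
      simp only [Finset.coe_sort_coe, Finset.mem_coe] at hbmem hbmem'
      have h1 := (hfmem b hbmem).2
      have h2 := (hfmem b' hbmem').2
      rw [hEq] at h1
      rw [hR, Finset.mem_Ico] at hbmem hbmem'
      exact desc_slice_unique (d := d) (by omega) (by omega) (by omega) (by omega) (by omega)
        h1 h2
    have hRV : R.card ≤ Vbad.card :=
      Finset.card_le_card_of_injOn f (fun b hb => (hfmem b hb).1) hinj
    have hRcard : R.card = 2^d := by
      rw [hR, Nat.card_Ico]
      have : 2^(d+1) = 2*2^d := by rw [pow_succ]; ring
      omega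
    have hVb : Vbad.card ≤ V1.card + V2a.card + V2b.card + V3.card := by
      rw [hVbad]
      calc (((V1 ∪ V2a) ∪ V2b) ∪ V3).card ≤ ((V1 ∪ V2a) ∪ V2b).card + V3.card :=
        Finset.card_union_le _ _
      _ ≤ (V1 ∪ V2a).card + V2b.card + V3.card := by
        have := Finset.card_union_le (V1 ∪ V2a) V2b
        omega
      _ ≤ V1.card + V2a.card + V2b.card + V3.card := by
        have := Finset.card_union_le V1 V2a
        omega
    have hB1 := V1_bound hP hr2 hn1
    have hB2 := V2a_bound (by omega) hP hr2 hn1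
    have hB3 := V2_sum_bound (P := P) hr2 hn1
    have hB4 := V3_bound (P := P) (by omega) hn1
    rw [← hV1] at hB1
    rw [← hV2a] at hB2
    rw [← hV2b, ← hV2a] at hB3
    rw [← hV3] at hB4
    have hpig : 2^d + 3 * 2^(r-1) ≤ 3 * Multiset.card P + 3*k + 2 := by omega
    -- final numeric contradiction
    have hEdef : (16:ℕ)^(k+6) = 2^(4*k+24) := by
      rw [show (16:ℕ) = 2^4 by norm_num, ← pow_mul, show 4*(k+6) = 4*k+24 by ring]
    have hLd : (2:ℕ)^(r-1) = 2^(k+1) * 2^d := by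
      rw [show r-1 = (k+1)+d by omega, pow_add]
    have key1 : 6 * 2^(k+1) ≤ 16^(k+6) := by
      rw [hEdef]
      calc 6 * 2^(k+1) ≤ 8 * 2^(k+1) := by omega
      _ = 2^(k+4) := by
        rw [show (8:ℕ) = 2^3 by norm_num, ← pow_add, show 3+(k+1) = k+4 by ring]
      _ ≤ 2^(4*k+24) := Nat.pow_le_pow_right (by norm_num) (by omega)
    have key2 : 6*k + 4 ≤ 2^d := by
      have hk2 : k < 2^k := Nat.lt_two_pow_self
      calc 6*k + 4 ≤ 10 * 2^k := by omega
      _ ≤ 16 * 2^k := by omega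
      _ = 2^(k+4) := by
        rw [show (16:ℕ) = 2^4 by norm_num, ← pow_add, show 4+k = k+4 by ring]
      _ ≤ 2^d := Nat.pow_le_pow_right (by norm_num) (by omega)
    rw [hLd] at hpig hcon
    have c1 : 16^(k+6) * (2^d + 3 * (2^(k+1) * 2^d))
        ≤ 16^(k+6) * (3 * Multiset.card P + 3*k + 2) :=
      Nat.mul_le_mul_left _ hpig
    have c3 : (6 * 2^(k+1)) * 2^d ≤ 16^(k+6) * 2^d := Nat.mul_le_mul_right _ key1
    have c4 : 16^(k+6) * (6*k+4) ≤ 16^(k+6) * 2^d := Nat.mul_le_mul_left _ key2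
    ring_nf at c1 c3 c4 hcon
    linarith [c1, c3, c4, hcon]

end Main

end S19


/-- For any fixed `k ≥ 2` and all sufficiently large complete
binary trees on `n = 2^r − 1` vertices, every `k`-RSPS has size at least
`(1 + 16^{-(k+6)})·(n+1)/2`. -/
theorem stmt19 (k : ℕ) (hk : 2 ≤ k) :
    ∃ N : ℕ, ∀ r n : ℕ, n = 2 ^ r - 1 → N ≤ n →
      ∀ P : Multiset (GPath (completeBinaryTree n) × Fin k),
        IsRSPS (completeBinaryTree n) k P →
        (1 + (16 : ℝ) ^ (-((k : ℤ) + 6))) * ((n : ℝ) + 1) / 2 ≤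
          (Multiset.card P : ℝ) := by
  refine ⟨2^(8*k+50), ?_⟩
  intro r n hn hN P hP
  have h0 : (1:ℕ) ≤ 2^(8*k+50) := Nat.one_le_two_pow
  have h1r : (1:ℕ) ≤ 2^r := Nat.one_le_two_pow
  haveI : NeZero n := ⟨by omega⟩
  have hn1 : n + 1 = 2^r := by omega
  have hrge : 8*k + 50 ≤ r := by
    have hlt : (2:ℕ)^(8*k+50) < 2^r := by omega
    have := (Nat.pow_lt_pow_iff_right (by norm_num : 1 < 2)).1 hlt
    omega
  have key := S19.main_bound hk hrge hn1 hP
  have hE0 : (0:ℝ) < (16:ℝ)^(k+6) := by positivity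
  have hzp : (16:ℝ) ^ (-((k:ℤ) + 6)) = ((16:ℝ)^(k+6))⁻¹ := by
    rw [show -((k:ℤ)+6) = -((k+6 : ℕ) : ℤ) by push_cast; ring, zpow_neg, zpow_natCast]
  have hcast : ((2:ℝ))^(r-1) * ((16:ℝ)^(k+6) + 1) ≤ (16:ℝ)^(k+6) * (Multiset.card P : ℝ) := by
    exact_mod_cast key
  have hn2 : (n:ℝ) + 1 = 2 * 2^(r-1) := by
    have hnn : n + 1 = 2 * 2^(r-1) := by
      rw [hn1, ← pow_succ']
      congr 1
      omega
    exact_mod_cast hnn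
  rw [hzp, hn2]
  have expand : (1 + ((16:ℝ)^(k+6))⁻¹) * (2 * 2^(r-1)) / 2
      = ((2:ℝ)^(r-1) * ((16:ℝ)^(k+6)+1)) / (16:ℝ)^(k+6) := by
    field_simp
  rw [expand, div_le_iff₀ hE0, mul_comm (Multiset.card P : ℝ) ((16:ℝ)^(k+6))]
  exact hcast
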